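/- (Theorem 2.) Under conditions C1–C4, fix x₀ ∈ [−a, a] and y₀ > 0. Then for every ε > 0 there exists T > 0 such that for every τ > T, any ỹ > 0 satisfying M(τ; x₀, ỹ) = M(τ; 0, y₀) must satisfy |ỹ − y₀| < ε. In words, the contour lines of the Lagrangian descriptor M of system (Sl) converge to horizontal line segments as τ → ∞ in a neighbourhood of the y-axis (the stable manifold of the origin). -/

import Mathlib

open Filter Real

private lemma my_int_exp (c A B : ℝ) (hc : c ≠ 0) :
    ∫ t in A..B, Real.exp (c * t) = (Real.exp (c * B) - Real.exp (c * A)) / c := by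
  rw [intervalIntegral.integral_comp_mul_left (fun x => Real.exp x) hc, integral_exp,
    smul_eq_mul, inv_mul_eq_div]

private lemma my_sqrt_le (u v : ℝ) : Real.sqrt (u ^ 2 + v ^ 2) ≤ |u| + |v| := by
  have h1 : u ^ 2 + v ^ 2 ≤ (|u| + |v|) ^ 2 := by
    nlinarith [sq_abs u, sq_abs v, mul_nonneg (abs_nonneg u) (abs_nonneg v)]
  calc Real.sqrt (u ^ 2 + v ^ 2) ≤ Real.sqrt ((|u| + |v|) ^ 2) := Real.sqrt_le_sqrt h1
    _ = |u| + |v| := Real.sqrt_sq (by positivity)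

private lemma my_alg3 (c y u : ℝ) (hc : c ≠ 0) : (c * y) * (u / c) = y * u := by
  field_simp

private lemma my_alg (c y u v : ℝ) (hc : c ≠ 0) :
    (y * c) * ((u - v) / (-c)) = y * (v - u) := by
  rw [div_neg, mul_neg, mul_comm y c, my_alg3 c y (u - v) hc]
  ring

private lemma my_uniq {K : NNReal} {v : ℝ → ℝ → ℝ} (hv : ∀ t, LipschitzWith K (v t))
    {F G : ℝ → ℝ} (hF : ∀ t, HasDerivAt F (v t (F t)) t)
    (hG : ∀ t, HasDerivAt G (v t (G t)) t) (h0 : F 0 = G 0) (t : ℝ) : F t = G t := by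
  have hFc : Continuous F := continuous_iff_continuousAt.2 fun s => (hF s).continuousAt
  have hGc : Continuous G := continuous_iff_continuousAt.2 fun s => (hG s).continuousAt
  have h := ODE_solution_unique_of_mem_Icc (v := v) (s := fun _ => Set.univ)
    (K := K) (a := -(|t| + 1)) (b := |t| + 1) (t₀ := 0)
    (fun t _ => (hv t).lipschitzOnWith)
    ⟨by nlinarith [abs_nonneg t], by nlinarith [abs_nonneg t]⟩
    hFc.continuousOn (fun s _ => hF s) (fun _ _ => trivial)
    hGc.continuousOn (fun s _ => hG s) (fun _ _ => trivial) h0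
  exact h ⟨by nlinarith [neg_abs_le t, abs_nonneg t], by nlinarith [le_abs_self t]⟩

private lemma my_uniq_neg {K : NNReal} {v : ℝ → ℝ → ℝ} (hv : ∀ t, LipschitzWith K (v t))
    {F G : ℝ → ℝ} (hF : ∀ t ≤ (0:ℝ), HasDerivAt F (v t (F t)) t)
    (hG : ∀ t ≤ (0:ℝ), HasDerivAt G (v t (G t)) t) (h0 : F 0 = G 0) {t : ℝ} (ht : t ≤ 0) :
    F t = G t := by
  have hFc : ContinuousOn F (Set.Icc (t - 1) 0) :=
    fun s hs => ((hF s hs.2).continuousAt).continuousWithinAt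
  have hGc : ContinuousOn G (Set.Icc (t - 1) 0) :=
    fun s hs => ((hG s hs.2).continuousAt).continuousWithinAt
  have h := ODE_solution_unique_of_mem_Icc_left (v := v) (s := fun _ => Set.univ)
    (K := K) (a := t - 1) (b := 0)
    (fun t _ => (hv t).lipschitzOnWith)
    hFc (fun s hs => (hF s hs.2).hasDerivWithinAt) (fun _ _ => trivial)
    hGc (fun s hs => (hG s hs.2).hasDerivWithinAt) (fun _ _ => trivial) h0
  exact h ⟨by linarith, ht⟩

set_option maxHeartbeats 1600000 in
/-- (Theorem 2.) For system (Sl): `x' = f(x), y' = -y f'(x)` under C1–C4, fix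
`x₀ ∈ [-a,a]` and `y₀ > 0`. For every `ε > 0` there is `T > 0` such that for every
`τ > T`, any `ỹ > 0` with `M(τ; x₀, ỹ) = M(τ; 0, y₀)` satisfies `|ỹ - y₀| < ε`:
the contour lines of `M` near the `y`-axis (the stable manifold of the origin)
converge to horizontal segments as `τ → ∞`. -/
theorem stmt_6 (f : ℝ → ℝ) (m a : ℝ) (ha : 0 < a)
    (hf : ContDiff ℝ 2 f) (hf0 : f 0 = 0)
    (hC1 : ∀ x : ℝ, (0 < x → 0 < f x) ∧ (x < 0 → f x < 0))
    (hC2 : ∀ x : ℝ, |f x| ≤ m)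
    (hC3 : ∀ x : ℝ, 0 < deriv f x ∧ deriv f x ≤ deriv f 0)
    (hC4 : ∀ x ∈ Set.Icc (-a) a, deriv f x = deriv f 0)
    (φ : ℝ × ℝ → ℝ → ℝ × ℝ) (hφ0 : ∀ q : ℝ × ℝ, φ q 0 = q)
    (hφ1 : ∀ (q : ℝ × ℝ) (t : ℝ), HasDerivAt (fun s => (φ q s).1) (f (φ q t).1) t)
    (hφ2 : ∀ (q : ℝ × ℝ) (t : ℝ),
      HasDerivAt (fun s => (φ q s).2) (-(φ q t).2 * deriv f (φ q t).1) t)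
    (M : ℝ → ℝ × ℝ → ℝ)
    (hM : ∀ (τ : ℝ) (q : ℝ × ℝ), M τ q =
      ∫ t in (-τ)..τ, Real.sqrt ((f (φ q t).1) ^ 2 + ((φ q t).2 * deriv f (φ q t).1) ^ 2))
    (x₀ y₀ : ℝ) (hx₀ : x₀ ∈ Set.Icc (-a) a) (hy₀ : 0 < y₀) :
    ∀ ε > 0, ∃ T > 0, ∀ τ > T, ∀ ytil > 0,
      M τ (x₀, ytil) = M τ (0, y₀) → |ytil - y₀| < ε := by
  intro ε hε
  set k := deriv f 0 with hk_def
  have hk : 0 < k := (hC3 0).1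
  have hdiff : Differentiable ℝ f := hf.differentiable (by norm_num)
  have hfc : Continuous f := hdiff.continuous
  have hf'c : Continuous (deriv f) := hf.continuous_deriv one_le_two
  have habs : ∀ x, |deriv f x| ≤ k := fun x => abs_le.2 ⟨by nlinarith [(hC3 x).1], (hC3 x).2⟩
  have hm : 0 ≤ m := le_trans (abs_nonneg _) (hC2 0)
  have habs0 : |x₀| ≤ a := abs_le.mpr ⟨hx₀.1, hx₀.2⟩
  -- Lipschitz constants
  have hlip : LipschitzWith ⟨k, hk.le⟩ f := by
    apply lipschitzWith_of_nnnorm_deriv_le hdiff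
    intro x
    exact NNReal.coe_le_coe.1 (by rw [coe_nnnorm, Real.norm_eq_abs]; exact habs x)
  have hlipy : ∀ c : ℝ, |c| ≤ k → LipschitzWith ⟨k, hk.le⟩ (fun y : ℝ => -y * c) := by
    intro c hc
    apply LipschitzWith.of_dist_le_mul
    intro y₁ y₂
    simp only [Real.dist_eq, NNReal.coe_mk]
    have h1 : -y₁ * c - -y₂ * c = -((y₁ - y₂) * c) := by ring
    rw [h1, abs_neg, abs_mul]
    show |y₁ - y₂| * |c| ≤ k * |y₁ - y₂|
    nlinarith [abs_nonneg (y₁ - y₂), abs_nonneg c]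
  -- linearity of f on [-a, a]
  have hlin : ∀ x ∈ Set.Icc (-a) a, f x = k * x := by
    intro x hx
    have h0m : (0:ℝ) ∈ Set.Icc (-a) a := ⟨by linarith, ha.le⟩
    have hd : ∀ y ∈ Set.Icc (-a) a, DifferentiableAt ℝ (fun z => f z - k * z) y :=
      fun y _ => (hdiff y).sub (differentiableAt_fun_id.const_mul k)
    have hd0 : ∀ y ∈ Set.Icc (-a) a, ‖deriv (fun z => f z - k * z) y‖ ≤ 0 := by
      intro y hy
      have h1 : HasDerivAt (fun z => f z - k * z) (deriv f y - k * 1) y :=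
        (hdiff y).hasDerivAt.sub ((hasDerivAt_id y).const_mul k)
      rw [h1.deriv, hC4 y hy]
      simp [hk_def]
    have h2 := Convex.norm_image_sub_le_of_norm_deriv_le hd hd0 (convex_Icc _ _) h0m hx
    simp only [Real.norm_eq_abs, zero_mul, hf0] at h2
    have h3 : f x - k * x = 0 := by
      have h4 : |f x - k * x| ≤ 0 := by
        calc |f x - k * x| = |f x - k * x - (0 - k * 0)| := by ring_nf
          _ ≤ 0 := h2
      exact abs_eq_zero.mp (le_antisymm h4 (abs_nonneg _))
    linarith
  -- trajectory of (0, y₀)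
  have hX0 : ∀ t, (φ (0, y₀) t).1 = 0 := by
    apply my_uniq (K := ⟨k, hk.le⟩) (v := fun _ x => f x) (fun _ => hlip)
      (F := fun t => (φ (0, y₀) t).1) (G := fun _ => 0)
      (fun t => hφ1 _ t)
      (fun t => by simpa [hf0] using (hasDerivAt_const t (0:ℝ)))
      (by simp [hφ0])
  have hY0 : ∀ t, (φ (0, y₀) t).2 = y₀ * Real.exp (-k * t) := by
    apply my_uniq (K := ⟨k, hk.le⟩)
      (v := fun u y => -y * deriv f ((φ (0, y₀) u).1))
      (fun u => hlipy _ (habs _))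
      (F := fun t => (φ (0, y₀) t).2) (G := fun t => y₀ * Real.exp (-k * t))
      (fun t => hφ2 _ t) ?_ (by simp [hφ0])
    intro t
    have h1 : HasDerivAt (fun u => y₀ * Real.exp (-k * u))
        (Real.exp (-k * t) * (-k * 1) * y₀) t :=
      ((((hasDerivAt_id t).const_mul (-k)).exp).const_mul y₀).congr_deriv (by simp only [id_eq]; ring)
    exact h1.congr_deriv (show Real.exp (-k * t) * (-k * 1) * y₀
      = -(y₀ * Real.exp (-k * t)) * deriv f ((φ (0, y₀) t).1) by rw [hX0 t, ← hk_def]; ring)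
  -- choice of T
  refine ⟨max 1 ((4 * (y₀ * k + m + y₀ + a) + 1) / (ε * k ^ 2)), by positivity, ?_⟩
  intro τ hτ ytil hytil heq
  have hτ1 : 1 < τ := lt_of_le_of_lt (le_max_left _ _) hτ
  have hτ0 : 0 < τ := by linarith
  have hA : 4 * (y₀ * k + m + y₀ + a) + 1 < τ * (ε * k ^ 2) := by
    have h := lt_of_le_of_lt (le_max_right 1 ((4 * (y₀ * k + m + y₀ + a) + 1) / (ε * k ^ 2))) hτ
    rw [div_lt_iff₀ (by positivity)] at h
    linarith
  set E := Real.exp (k * τ) with hE_def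
  have hEpos : 0 < E := Real.exp_pos _
  have hE1 : 1 < E := by
    have := Real.add_one_le_exp (k * τ)
    nlinarith [mul_pos hk hτ0]
  have hEq4 : 1 + k * τ + (k * τ) ^ 2 / 4 ≤ E := by
    have h2 : Real.exp (k * τ / 2) * Real.exp (k * τ / 2) = E := by
      rw [hE_def, ← Real.exp_add]
      congr 1
      ring
    nlinarith [Real.add_one_le_exp (k * τ / 2), Real.exp_pos (k * τ / 2),
      mul_pos hk hτ0]
  have hEinvpos : 0 < E⁻¹ := inv_pos.2 hEpos
  have hEinv1 : E⁻¹ ≤ 1 := inv_le_one_of_one_le₀ hE1.le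
  -- backward trajectory of (x₀, ytil)
  have hmemneg : ∀ u ≤ (0:ℝ), x₀ * Real.exp (k * u) ∈ Set.Icc (-a) a := by
    intro u hu
    have he1 : Real.exp (k * u) ≤ 1 := by
      calc Real.exp (k * u) ≤ Real.exp 0 := Real.exp_le_exp.2 (by nlinarith)
        _ = 1 := Real.exp_zero
    have he0 : (0:ℝ) < Real.exp (k * u) := Real.exp_pos _
    have hx1 : -a ≤ x₀ := hx₀.1
    have hx2 : x₀ ≤ a := hx₀.2
    constructor
    · nlinarith [mul_nonneg (by linarith : (0:ℝ) ≤ x₀ + a) he0.le,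
        mul_nonneg ha.le (by linarith : (0:ℝ) ≤ 1 - Real.exp (k * u))]
    · nlinarith [mul_nonneg (by linarith : (0:ℝ) ≤ a - x₀) he0.le,
        mul_nonneg ha.le (by linarith : (0:ℝ) ≤ 1 - Real.exp (k * u))]
  have hXneg : ∀ s ≤ (0:ℝ), (φ (x₀, ytil) s).1 = x₀ * Real.exp (k * s) := by
    intro s hs
    refine my_uniq_neg (K := ⟨k, hk.le⟩) (v := fun _ x => f x) (fun _ => hlip)
      (F := fun u => (φ (x₀, ytil) u).1) (G := fun u => x₀ * Real.exp (k * u))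
      (fun u _ => hφ1 _ u) ?_ (by simp [hφ0]) hs
    intro u hu
    have h1 : HasDerivAt (fun w => x₀ * Real.exp (k * w))
        (Real.exp (k * u) * (k * 1) * x₀) u :=
      ((((hasDerivAt_id u).const_mul k).exp).const_mul x₀).congr_deriv (by simp only [id_eq]; ring)
    exact h1.congr_deriv (show Real.exp (k * u) * (k * 1) * x₀
      = f (x₀ * Real.exp (k * u)) by rw [hlin _ (hmemneg u hu)]; ring)
  have hYneg : ∀ s ≤ (0:ℝ), (φ (x₀, ytil) s).2 = ytil * Real.exp (-k * s) := by
    intro s hs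
    refine my_uniq_neg (K := ⟨k, hk.le⟩)
      (v := fun u y => -y * deriv f ((φ (x₀, ytil) u).1))
      (fun u => hlipy _ (habs _))
      (F := fun u => (φ (x₀, ytil) u).2) (G := fun u => ytil * Real.exp (-k * u))
      (fun u _ => hφ2 _ u) ?_ (by simp [hφ0]) hs
    intro u hu
    have h1 : HasDerivAt (fun w => ytil * Real.exp (-k * w))
        (Real.exp (-k * u) * (-k * 1) * ytil) u :=
      ((((hasDerivAt_id u).const_mul (-k)).exp).const_mul ytil).congr_deriv (by simp only [id_eq]; ring)
    exact h1.congr_deriv (show Real.exp (-k * u) * (-k * 1) * ytil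
      = -(ytil * Real.exp (-k * u)) * deriv f ((φ (x₀, ytil) u).1) by
        rw [hXneg u hu, hC4 _ (hmemneg u hu)]; ring)
  -- forward bound on |Y|
  have hYc : Continuous (fun u => (φ (x₀, ytil) u).2) :=
    continuous_iff_continuousAt.2 fun u => (hφ2 _ u).continuousAt
  have hYfw : ∀ s, 0 ≤ s → |(φ (x₀, ytil) s).2| ≤ ytil := by
    have hH : ∀ s : ℝ, HasDerivAt (fun u => ((φ (x₀, ytil) u).2) ^ 2)
        (2 * ((φ (x₀, ytil) s).2) *
          (-(φ (x₀, ytil) s).2 * deriv f ((φ (x₀, ytil) s).1))) s := by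
      intro s
      have h1 := (hφ2 (x₀, ytil) s).fun_pow 2
      refine h1.congr_deriv ?_
      push_cast
      ring
    have hanti : AntitoneOn (fun u => ((φ (x₀, ytil) u).2) ^ 2) (Set.Ici 0) := by
      apply antitoneOn_of_deriv_nonpos (convex_Ici 0) ((hYc.pow 2).continuousOn)
      · exact fun s _ => (hH s).differentiableAt.differentiableWithinAt
      · intro s _
        rw [show deriv ((fun u => (φ (x₀, ytil) u).2) ^ 2) s = _ from (hH s).deriv]
        nlinarith [(hC3 ((φ (x₀, ytil) s).1)).1, sq_nonneg ((φ (x₀, ytil) s).2)]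
    intro s hs
    have h2 := hanti Set.self_mem_Ici (Set.mem_Ici.2 hs) hs
    simp only [hφ0] at h2
    rw [← Real.sqrt_sq_eq_abs]
    calc Real.sqrt (((φ (x₀, ytil) s).2) ^ 2) ≤ Real.sqrt (ytil ^ 2) :=
          Real.sqrt_le_sqrt h2
      _ = ytil := Real.sqrt_sq hytil.le
  -- continuity and integrability of the integrand
  have hcont : ∀ q : ℝ × ℝ, Continuous (fun t =>
      Real.sqrt ((f (φ q t).1) ^ 2 + ((φ q t).2 * deriv f (φ q t).1) ^ 2)) := by
    intro q
    have hXc : Continuous (fun t => (φ q t).1) :=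
      continuous_iff_continuousAt.2 fun t => (hφ1 q t).continuousAt
    have hYc' : Continuous (fun t => (φ q t).2) :=
      continuous_iff_continuousAt.2 fun t => (hφ2 q t).continuousAt
    exact Real.continuous_sqrt.comp
      (((hfc.comp hXc).pow 2).add ((hYc'.mul (hf'c.comp hXc)).pow 2))
  have hii : ∀ A B : ℝ, IntervalIntegrable (fun t =>
      Real.sqrt ((f (φ (x₀, ytil) t).1) ^ 2 +
        ((φ (x₀, ytil) t).2 * deriv f (φ (x₀, ytil) t).1) ^ 2))
      MeasureTheory.volume A B :=
    fun A B => (hcont _).intervalIntegrable A B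
  have hexp_cont : ∀ c d : ℝ, Continuous (fun t : ℝ => d * Real.exp (c * t)) :=
    fun c d => continuous_const.mul (Real.continuous_exp.comp (continuous_const.mul continuous_id))
  -- value of M τ (0, y₀)
  have hRHS : (∫ t in (-τ)..τ, Real.sqrt ((f (φ (0, y₀) t).1) ^ 2 +
      ((φ (0, y₀) t).2 * deriv f (φ (0, y₀) t).1) ^ 2)) = y₀ * (E - E⁻¹) := by
    have hcongr : ∀ t : ℝ, Real.sqrt ((f (φ (0, y₀) t).1) ^ 2 +
        ((φ (0, y₀) t).2 * deriv f (φ (0, y₀) t).1) ^ 2)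
        = (y₀ * k) * Real.exp (-k * t) := by
      intro t
      rw [hX0 t, hY0 t, hf0, ← hk_def]
      rw [show (0:ℝ) ^ 2 + (y₀ * Real.exp (-k * t) * k) ^ 2
          = ((y₀ * k) * Real.exp (-k * t)) ^ 2 by ring]
      exact Real.sqrt_sq (by positivity)
    rw [intervalIntegral.integral_congr (fun t _ => hcongr t)]
    rw [intervalIntegral.integral_const_mul, my_int_exp (-k) _ _ (by linarith)]
    rw [show -k * τ = -(k * τ) by ring, show -k * (-τ) = k * τ by ring,
      Real.exp_neg, ← hE_def]
    exact my_alg k y₀ E⁻¹ E hk.ne'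
  have heq' : (∫ t in (-τ)..τ, Real.sqrt ((f (φ (x₀, ytil) t).1) ^ 2 +
      ((φ (x₀, ytil) t).2 * deriv f (φ (x₀, ytil) t).1) ^ 2)) = y₀ * (E - E⁻¹) := by
    rw [← hM τ (x₀, ytil), heq, hM τ (0, y₀)]
    exact hRHS
  have hsplit := intervalIntegral.integral_add_adjacent_intervals (hii (-τ) 0) (hii 0 τ)
  -- lower bound on backward piece
  have hlowval : (∫ t in (-τ)..(0:ℝ), (ytil * k) * Real.exp (-k * t)) = ytil * (E - 1) := by
    rw [intervalIntegral.integral_const_mul, my_int_exp (-k) _ _ (by linarith)]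
    rw [show -k * (0:ℝ) = 0 by ring, show -k * (-τ) = k * τ by ring,
      Real.exp_zero, ← hE_def]
    exact my_alg k ytil 1 E hk.ne'
  have hlow : ytil * (E - 1) ≤ ∫ t in (-τ)..(0:ℝ),
      Real.sqrt ((f (φ (x₀, ytil) t).1) ^ 2 +
        ((φ (x₀, ytil) t).2 * deriv f (φ (x₀, ytil) t).1) ^ 2) := by
    rw [← hlowval]
    apply intervalIntegral.integral_mono_on (by linarith)
      ((hexp_cont (-k) (ytil * k)).intervalIntegrable _ _) (hii _ _)
    intro s hs
    rw [hXneg s hs.2, hYneg s hs.2, hC4 _ (hmemneg s hs.2)]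
    have h5 : (ytil * k) * Real.exp (-k * s)
        = Real.sqrt ((ytil * Real.exp (-k * s) * k) ^ 2) := by
      rw [Real.sqrt_sq (by positivity)]
      ring
    rw [h5]
    exact Real.sqrt_le_sqrt (le_add_of_nonneg_left (sq_nonneg _))
  -- upper bound on backward piece
  have hupval1 : (∫ t in (-τ)..(0:ℝ), (k * a) * Real.exp (k * t)) = a * (1 - E⁻¹) := by
    rw [intervalIntegral.integral_const_mul, my_int_exp k _ _ hk.ne']
    rw [show k * (0:ℝ) = 0 by ring, show k * (-τ) = -(k * τ) by ring,
      Real.exp_zero, Real.exp_neg, ← hE_def]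
    exact my_alg3 k a (1 - E⁻¹) hk.ne'
  have hup : (∫ t in (-τ)..(0:ℝ),
      Real.sqrt ((f (φ (x₀, ytil) t).1) ^ 2 +
        ((φ (x₀, ytil) t).2 * deriv f (φ (x₀, ytil) t).1) ^ 2))
      ≤ a + ytil * (E - 1) := by
    have hmono : (∫ t in (-τ)..(0:ℝ),
        Real.sqrt ((f (φ (x₀, ytil) t).1) ^ 2 +
          ((φ (x₀, ytil) t).2 * deriv f (φ (x₀, ytil) t).1) ^ 2))
        ≤ ∫ t in (-τ)..(0:ℝ), ((k * a) * Real.exp (k * t) + (ytil * k) * Real.exp (-k * t)) := by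
      apply intervalIntegral.integral_mono_on (by linarith) (hii _ _)
        (((hexp_cont k (k * a)).add (hexp_cont (-k) (ytil * k))).intervalIntegrable _ _)
      intro s hs
      rw [hXneg s hs.2, hYneg s hs.2, hC4 _ (hmemneg s hs.2),
        hlin _ (hmemneg s hs.2)]
      have h1 := my_sqrt_le (k * (x₀ * Real.exp (k * s))) (ytil * Real.exp (-k * s) * k)
      have e1 : |k * (x₀ * Real.exp (k * s))| ≤ (k * a) * Real.exp (k * s) := by
        rw [abs_mul, abs_mul, abs_of_pos hk, abs_of_pos (Real.exp_pos _)]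
        have h2 := mul_le_mul_of_nonneg_right habs0 (Real.exp_pos (k * s)).le
        nlinarith
      have e2 : |ytil * Real.exp (-k * s) * k| = (ytil * k) * Real.exp (-k * s) := by
        rw [abs_of_pos (by positivity)]
        ring
      show _ ≤ (k * a) * Real.exp (k * s) + (ytil * k) * Real.exp (-k * s)
      linarith
    have hintadd : (∫ t in (-τ)..(0:ℝ),
        ((k * a) * Real.exp (k * t) + (ytil * k) * Real.exp (-k * t)))
        = a * (1 - E⁻¹) + ytil * (E - 1) := by
      rw [intervalIntegral.integral_add ((hexp_cont k (k * a)).intervalIntegrable _ _)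
        ((hexp_cont (-k) (ytil * k)).intervalIntegrable _ _), hupval1, hlowval]
    have ha1 : a * (1 - E⁻¹) ≤ a := by nlinarith
    linarith
  -- bounds on forward piece
  have hfwd_lo : 0 ≤ ∫ t in (0:ℝ)..τ,
      Real.sqrt ((f (φ (x₀, ytil) t).1) ^ 2 +
        ((φ (x₀, ytil) t).2 * deriv f (φ (x₀, ytil) t).1) ^ 2) :=
    intervalIntegral.integral_nonneg hτ0.le (fun s _ => Real.sqrt_nonneg _)
  have hfwd_hi : (∫ t in (0:ℝ)..τ,
      Real.sqrt ((f (φ (x₀, ytil) t).1) ^ 2 +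
        ((φ (x₀, ytil) t).2 * deriv f (φ (x₀, ytil) t).1) ^ 2))
      ≤ τ * (m + ytil * k) := by
    have hmono : (∫ t in (0:ℝ)..τ,
        Real.sqrt ((f (φ (x₀, ytil) t).1) ^ 2 +
          ((φ (x₀, ytil) t).2 * deriv f (φ (x₀, ytil) t).1) ^ 2))
        ≤ ∫ _t in (0:ℝ)..τ, (m + ytil * k) := by
      apply intervalIntegral.integral_mono_on hτ0.le (hii _ _) intervalIntegrable_const
      intro s hs
      have h1 := my_sqrt_le (f ((φ (x₀, ytil) s).1))
        ((φ (x₀, ytil) s).2 * deriv f ((φ (x₀, ytil) s).1))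
      have h2 := hC2 ((φ (x₀, ytil) s).1)
      have h3 : |(φ (x₀, ytil) s).2 * deriv f ((φ (x₀, ytil) s).1)| ≤ ytil * k := by
        rw [abs_mul]
        exact mul_le_mul (hYfw s hs.1) (habs _) (abs_nonneg _) hytil.le
      linarith
    rwa [intervalIntegral.integral_const, smul_eq_mul, sub_zero] at hmono
  -- combine
  have key1 : ytil * (E - 1) ≤ y₀ * (E - E⁻¹) := by
    rw [← heq', ← hsplit]
    linarith
  have key2 : y₀ * (E - E⁻¹) ≤ a + ytil * (E - 1) + τ * (m + ytil * k) := by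
    rw [← heq', ← hsplit]
    linarith
  have hkey : y₀ * k * τ + y₀ + a + m * τ < ε * (E - 1) := by
    have hA' : (4 * (y₀ * k + m + y₀ + a) + 1) * τ < (τ * (ε * k ^ 2)) * τ :=
      mul_lt_mul_of_pos_right hA hτ0
    have h0 : 0 ≤ ε * (E - 1 - k * τ - (k * τ) ^ 2 / 4) :=
      mul_nonneg hε.le (by linarith)
    nlinarith [mul_nonneg (mul_nonneg hε.le hk.le) hτ0.le,
      mul_nonneg (by linarith : (0:ℝ) ≤ y₀ + a) (by linarith : (0:ℝ) ≤ τ - 1),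
      mul_nonneg hm hτ0.le, mul_nonneg (mul_nonneg hy₀.le hk.le) hτ0.le]
  rw [abs_lt]
  constructor
  · -- y₀ - ytil < ε
    nlinarith [key2, hkey, mul_pos hy₀ hEinvpos, mul_pos hk hτ0, hytil,
      mul_nonneg hy₀.le (by linarith : (0:ℝ) ≤ 1 - E⁻¹), hEpos, hE1]
  · -- ytil - y₀ < ε
    nlinarith [key1, hkey, mul_pos hy₀ hEinvpos, hE1,
      mul_nonneg (mul_nonneg hy₀.le hk.le) hτ0.le, mul_nonneg hm hτ0.le]
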